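/- arXiv:2103.04597 — 5 statements merged into one kernel-verified Lean document; each statement's English description precedes it below -/
import Mathlib

section
/- Let G be a finite group with normal subgroups M and N such that G = MN and G/N has prime order. Let σ be an automorphism of G stabilizing both M and N, and let χ be an irreducible complex character of G. Assume that the restriction of χ to N is reducible or the restriction of χ to M ∩ N is irreducible, and that the restrictions of χ to M and to N are both σ-stable. Then χ is σ-stable. -/
def IsIrrChar (H : Type) [Group H] (χ : H → ℂ) : Prop :=
  ∃ V : FDRep ℂ H, CategoryTheory.Simple V ∧ χ = FDRep.character V

/-!
Characters are those of objects of `FDRep ℂ G`; the inner product `⟨χ_A, χ_B⟩` is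
`finrank ℂ (A ⟶ B)`.

Let `p = [G : N]`, let `ℓ` be a linear character of `G` with kernel `N`, and `ψ = σχ`. Since
`∑_{j<p} ℓʲ` is `p` times the indicator function of `N`,
`∑_{j<p} ⟨χ, ℓʲψ⟩ = ⟨ψ_N, χ_N⟩ = ⟨χ_N, χ_N⟩`.

If `χ_N` is reducible, then `⟨χ_N, χ_N⟩ ≥ 2` while each `⟨χ, ℓʲχ⟩ ≤ 1`, so the identity for
`ψ = χ` gives `χ = ℓʲχ` for some `0 < j < p`. As `ℓʲ` also has kernel `N`, `χ` vanishes off `N`.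
So does `ψ`, because `σ` preserves `N`, and `ψ = χ` on `N`.

If `χ_{M∩N}` is irreducible, then `χ = ℓʲψ` for some `j < p`, and restricting to `M`, where
`ψ = χ`, gives `χ_M = ℓʲχ_M`. As `G = MN`, `M ∩ N` has index `p` in `M`, and the identity for
`M` over `M ∩ N` leaves room for only one such `j`, namely `j = 0`.
-/

open CategoryTheory Module

lemma Submodule.projection_apply_comm {R E : Type*} [Ring R] [AddCommGroup E] [Module R E]
    {p q : Submodule R E} (hpq : IsCompl p q) (T : E →ₗ[R] E) (hp : ∀ x ∈ p, T x ∈ p)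
    (hq : ∀ x ∈ q, T x ∈ q) (x : E) :
    p.projection q hpq (T x) = T (p.projection q hpq x) := by
  set y := p.projection q hpq x
  have hTy : p.projection q hpq (T y) = T y :=
    projection_apply_of_mem_left hpq (hp y (projection_apply_mem hpq x))
  have hTz : p.projection q hpq (T (x - y)) = 0 :=
    projection_apply_of_mem_right hpq (hq _ (sub_projection_mem hpq x))
  rw [← add_sub_cancel y x, map_add, map_add, hTy, hTz, add_zero]

namespace MonoidHom

variable {G : Type*} [Group G]

lemma pow_ne_one_of_notMem_ker {H : Type*} [Group H] (ℓ : G →* H) {j : ℕ}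
    (hj : j.Coprime ℓ.ker.index) {g : G} (hg : g ∉ ℓ.ker) : ℓ g ^ j ≠ 1 := fun h => by
  refine hg (mem_ker.mpr (orderOf_eq_one_iff.mp (Nat.dvd_one.mp ?_)))
  rw [← hj]
  refine Nat.dvd_gcd (orderOf_dvd_of_pow_eq_one h) (orderOf_dvd_of_pow_eq_one ?_)
  rw [← map_pow]
  exact ℓ.ker.pow_index_mem g

lemma index_ker_comp_subtype {H : Type*} [Group H] (ℓ : G →* H) {M : Subgroup G}
    (hM : M ⊔ ℓ.ker = ⊤) : (ℓ.comp M.subtype).ker.index = ℓ.ker.index := by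
  rw [← comap_ker]
  change ℓ.ker.relIndex M = _
  rw [← Subgroup.relIndex_sup_right, hM, Subgroup.relIndex_top_right]

lemma sum_range_index_ker_pow (ℓ : G →* ℂˣ) (g : G) :
    ∑ j ∈ Finset.range ℓ.ker.index, (ℓ g : ℂ) ^ j =
      if g ∈ ℓ.ker then (ℓ.ker.index : ℂ) else 0 := by
  split_ifs with hg
  · simp [mem_ker.mp hg]
  · have hne : (ℓ g : ℂ) ≠ 1 := fun h => hg (mem_ker.mpr (Units.val_eq_one.mp h))
    have hpow : (ℓ g : ℂ) ^ ℓ.ker.index = 1 := by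
      rw [← Units.val_pow_eq_pow_val, ← map_pow, ℓ.ker.pow_index_mem g, Units.val_one]
    rw [geom_sum_eq hne, hpow, sub_self, zero_div]

end MonoidHom

lemma Subgroup.exists_monoidHom_units_ker_eq {G : Type*} [Group G] (N : Subgroup G) [N.Normal]
    [Finite (G ⧸ N)] [IsCyclic (G ⧸ N)] : ∃ ℓ : G →* ℂˣ, ℓ.ker = N := by
  have : NeZero (Nat.card (G ⧸ N)) := ⟨Nat.card_pos.ne'⟩
  let e : G ⧸ N ≃* rootsOfUnity (Nat.card (G ⧸ N)) ℂ :=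
    mulEquivOfCyclicCardEq (Complex.card_rootsOfUnity _).symm
  refine ⟨(Subgroup.subtype _).comp (e.toMonoidHom.comp (QuotientGroup.mk' N)), ?_⟩
  rw [MonoidHom.ker_comp_of_injective _ _ (Subgroup.subtype_injective _),
    MonoidHom.ker_comp_of_injective _ _ e.injective, QuotientGroup.ker_mk']

namespace FDRep

section Field

variable {k G : Type*} [Field k] [Group G]

lemma hom_comm_apply {X Y : FDRep k G} (f : Y ⟶ X) (g : G) (y : Y) :
    f.hom (Y.ρ g y) = X.ρ g (f.hom y) :=
  congrArg (fun φ : Y.V ⟶ X.V => φ y) (f.comm g)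

lemma injective_of_mono {X Y : FDRep k G} (f : Y ⟶ X) [Mono f] : Function.Injective f.hom :=
  (Rep.mono_iff_injective ((forget₂ (FDRep k G) (Rep k G)).map f)).mp inferInstance

lemma isIso_of_bijective {X Y : FDRep k G} (f : Y ⟶ X) (hf : Function.Bijective f.hom) :
    IsIso f :=
  have : IsIso f.hom := (ConcreteCategory.isIso_iff_bijective f.hom).mpr hf
  Action.isIso_of_hom_isIso f

def rangeSubrep {X Y : FDRep k G} (f : Y ⟶ X) : Subrepresentation X.ρ where
  toSubmodule := LinearMap.range f.hom.hom.hom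
  apply_mem_toSubmodule g := by
    rintro _ ⟨y, rfl⟩
    exact ⟨Y.ρ g y, hom_comm_apply f g y⟩

lemma id_ne_zero_of_finrank_end_pos (X : FDRep k G) (h : 0 < finrank k (X ⟶ X)) : 𝟙 X ≠ 0 := by
  obtain ⟨f, hf⟩ := finrank_pos_iff_exists_ne_zero.mp h
  intro h0
  exact hf (by rw [← Category.comp_id f, h0, Limits.comp_zero])

lemma eq_bot_or_eq_top_of_finrank_end_eq_one [Finite G] [NeZero (Nat.card G : k)]
    (X : FDRep k G) (h : finrank k (X ⟶ X) = 1) (p : Subrepresentation X.ρ) : p = ⊥ ∨ p = ⊤ := by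
  -- By Maschke `p` has an invariant complement, and the projection along it is a scalar.
  obtain ⟨q, hpq⟩ := exists_isCompl p
  have hpq' : IsCompl p.toSubmodule q.toSubmodule :=
    ⟨disjoint_iff.mpr (congrArg Subrepresentation.toSubmodule (disjoint_iff.mp hpq.disjoint)),
      codisjoint_iff.mpr
        (congrArg Subrepresentation.toSubmodule (codisjoint_iff.mp hpq.codisjoint))⟩
  let π : X ⟶ X := ⟨FGModuleCat.ofHom (p.toSubmodule.projection q.toSubmodule hpq'), fun g => by
    ext x
    exact Submodule.projection_apply_comm hpq' (X.ρ g) (fun x hx => p.apply_mem_toSubmodule g hx)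
      (fun x hx => q.apply_mem_toSubmodule g hx) x⟩
  obtain ⟨c, hc⟩ := (finrank_eq_one_iff_of_nonzero' _
    (id_ne_zero_of_finrank_end_pos X (h ▸ one_pos))).mp h π
  have hπ : ∀ x, c • x = p.toSubmodule.projection q.toSubmodule hpq' x := fun x =>
    congrArg (fun φ : X ⟶ X => φ.hom x) hc
  refine or_iff_not_imp_left.mpr fun hbot => eq_top_iff.mpr fun x _ => ?_
  obtain ⟨x₀, hx₀p, hx₀⟩ := Submodule.exists_mem_ne_zero_of_ne_bot
    (fun h0 => hbot (Subrepresentation.toSubmodule_injective h0))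
  have hc1 : c = 1 := smul_left_injective k hx₀ <| show c • x₀ = (1 : k) • x₀ by
    rw [hπ, one_smul, Submodule.projection_apply_of_mem_left hpq' hx₀p]
  rw [← one_smul k x, ← hc1, hπ]
  exact Submodule.projection_apply_mem hpq' x

lemma simple_of_finrank_end_eq_one [Finite G] [NeZero (Nat.card G : k)] (X : FDRep k G)
    (h : finrank k (X ⟶ X) = 1) : Simple X where
  mono_isIso_iff_nonzero {Y} f _ := by
    refine ⟨fun _ h0 => id_ne_zero_of_finrank_end_pos X (h ▸ one_pos) ?_, fun hf => ?_⟩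
    · subst h0
      rw [← IsIso.inv_hom_id (0 : Y ⟶ X), Limits.comp_zero]
    refine isIso_of_bijective f ⟨injective_of_mono f, ?_⟩
    rcases eq_bot_or_eq_top_of_finrank_end_eq_one X h (rangeSubrep f) with hbot | htop
    · have hrange : LinearMap.range f.hom.hom.hom = ⊥ :=
        congrArg Subrepresentation.toSubmodule hbot
      refine absurd (Action.hom_ext _ _ ?_) hf
      ext y
      exact LinearMap.congr_fun (LinearMap.range_eq_bot.mp hrange) y
    · have hrange : LinearMap.range f.hom.hom.hom = ⊤ :=
        congrArg Subrepresentation.toSubmodule htop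
      exact LinearMap.range_eq_top.mp hrange

noncomputable def res {H : Type*} [Group H] (f : H →* G) (V : FDRep k G) : FDRep k H :=
  FDRep.of (V.ρ.comp f)

noncomputable def twist (ℓ : G →* kˣ) (V : FDRep k G) : FDRep k G :=
  FDRep.of (V := V)
    { toFun g := (ℓ g : k) • V.ρ g
      map_one' := by simp
      map_mul' g h := by simp only [map_mul, Units.val_mul, smul_mul_smul_comm] }

@[simp]
lemma char_res {H : Type*} [Group H] (f : H →* G) (V : FDRep k G) (h : H) :
    (res f V).character h = V.character (f h) := rfl

@[simp]
lemma char_twist (ℓ : G →* kˣ) (V : FDRep k G) (g : G) :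
    (twist ℓ V).character g = ℓ g * V.character g :=
  LinearMap.map_smul (LinearMap.trace k V) _ (V.ρ g)

@[simp]
lemma char_twist_one (V : FDRep k G) : (twist 1 V).character = V.character :=
  funext fun g => by simp

lemma finrank_hom_le_finrank_hom_res {H : Type*} [Group H] (f : H →* G) (A B : FDRep k G) :
    finrank k (A ⟶ B) ≤ finrank k (res f A ⟶ res f B) := by
  let Φ : (A ⟶ B) →ₗ[k] (res f A ⟶ res f B) :=
    { toFun φ := ⟨φ.hom, fun h => φ.comm (f h)⟩
      map_add' _ _ := rfl
      map_smul' _ _ := rfl }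
  refine LinearMap.finrank_le_finrank_of_injective (f := Φ) fun φ ψ hφψ => ?_
  exact Action.hom_ext _ _ (congrArg (fun t : res f A ⟶ res f B => t.hom) hφψ)

end Field

variable {G : Type*} [Group G]

lemma finrank_hom_eq_sum [Fintype G] (A B : FDRep ℂ G) :
    (finrank ℂ (A ⟶ B) : ℂ) = (Nat.card G : ℂ)⁻¹ * ∑ g, B.character g * A.character g⁻¹ :=
  have : Invertible (Nat.card G : ℂ) := invertibleOfNonzero (NeZero.ne _)
  (scalar_product_char_eq_finrank_equivariant A B).symm

lemma finrank_hom_eq_of_character_eq [Finite G] {A A' B B' : FDRep ℂ G}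
    (hA : A.character = A'.character) (hB : B.character = B'.character) :
    finrank ℂ (A ⟶ B) = finrank ℂ (A' ⟶ B') := by
  have := Fintype.ofFinite G
  exact_mod_cast (finrank_hom_eq_sum A B).trans (hA ▸ hB ▸ (finrank_hom_eq_sum A' B').symm)

lemma finrank_hom_twist [Finite G] (ℓ : G →* ℂˣ) (A B : FDRep ℂ G) :
    finrank ℂ (twist ℓ A ⟶ twist ℓ B) = finrank ℂ (A ⟶ B) := by
  have := Fintype.ofFinite G
  have hℓ : ∀ g, (ℓ g : ℂ) * (ℓ g⁻¹ : ℂ) = 1 := fun g => by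
    rw [← Units.val_mul, ← map_mul, mul_inv_cancel, map_one, Units.val_one]
  have hsum := finrank_hom_eq_sum (twist ℓ A) (twist ℓ B)
  simp only [char_twist, mul_mul_mul_comm _ (B.character _), hℓ, one_mul,
    ← finrank_hom_eq_sum] at hsum
  exact_mod_cast hsum

lemma finrank_end_res_mulEquiv [Finite G] {H : Type*} [Group H] (e : H ≃* G) (A : FDRep ℂ G) :
    finrank ℂ (res e.toMonoidHom A ⟶ res e.toMonoidHom A) = finrank ℂ (A ⟶ A) := by
  have hA : (res e.symm.toMonoidHom (res e.toMonoidHom A)).character = A.character :=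
    funext fun g => by simp
  refine le_antisymm ?_ (finrank_hom_le_finrank_hom_res _ A A)
  calc _ ≤ _ := finrank_hom_le_finrank_hom_res e.symm.toMonoidHom _ _
    _ = _ := finrank_hom_eq_of_character_eq hA hA

lemma finrank_end_eq_one (A : FDRep ℂ G) [Simple A] : finrank ℂ (A ⟶ A) = 1 := by
  classical
  rw [finrank_hom_simple_simple, if_pos ⟨Iso.refl A⟩]

lemma finrank_hom_le_one (A B : FDRep ℂ G) [Simple A] [Simple B] : finrank ℂ (A ⟶ B) ≤ 1 := by
  classical
  rw [finrank_hom_simple_simple]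
  split_ifs <;> simp

lemma character_eq_of_finrank_hom_ne_zero {A B : FDRep ℂ G} [Simple A] [Simple B]
    (h : finrank ℂ (A ⟶ B) ≠ 0) : A.character = B.character := by
  classical
  rw [finrank_hom_simple_simple] at h
  split_ifs at h with hiso
  · exact char_iso hiso.some
  · exact absurd rfl h

lemma simple_iff_finrank_end_eq_one [Finite G] (A : FDRep ℂ G) :
    Simple A ↔ finrank ℂ (A ⟶ A) = 1 :=
  ⟨fun _ => finrank_end_eq_one A, simple_of_finrank_end_eq_one A⟩

lemma simple_twist [Finite G] (ℓ : G →* ℂˣ) (A : FDRep ℂ G) [Simple A] : Simple (twist ℓ A) :=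
  (simple_iff_finrank_end_eq_one _).mpr ((finrank_hom_twist ℓ A A).trans (finrank_end_eq_one A))

lemma simple_res_mulEquiv [Finite G] {H : Type*} [Group H] (e : H ≃* G) (A : FDRep ℂ G)
    [Simple A] : Simple (res e.toMonoidHom A) := by
  have : Finite H := Finite.of_equiv G e.symm.toEquiv
  exact (simple_iff_finrank_end_eq_one _).mpr
    ((finrank_end_res_mulEquiv e A).trans (finrank_end_eq_one A))

lemma isIrrChar_character_iff {H : Type} [Group H] [Finite H] (X : FDRep ℂ H) :
    IsIrrChar H X.character ↔ finrank ℂ (X ⟶ X) = 1 := by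
  refine ⟨fun ⟨U, _, hU⟩ => ?_, fun h => ⟨X, simple_of_finrank_end_eq_one X h, rfl⟩⟩
  exact (finrank_hom_eq_of_character_eq hU hU).trans (finrank_end_eq_one U)

/-- Frobenius reciprocity for `Ind_K^G 1 = ⨁_{j < [G:K]} ℓʲ`, where `K = ker ℓ`. -/
theorem sum_finrank_hom_twist_pow [Finite G] (ℓ : G →* ℂˣ) (A B : FDRep ℂ G) :
    ∑ j ∈ Finset.range ℓ.ker.index, finrank ℂ (B ⟶ twist (ℓ ^ j) A) =
      finrank ℂ (res ℓ.ker.subtype B ⟶ res ℓ.ker.subtype A) := by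
  classical
  have := Fintype.ofFinite G
  have hcard : (Nat.card G : ℂ) = Nat.card ℓ.ker * ℓ.ker.index := by
    exact_mod_cast ℓ.ker.card_mul_index.symm
  have hK : (Nat.card ℓ.ker : ℂ) ≠ 0 := NeZero.ne _
  have hidx : (ℓ.ker.index : ℂ) ≠ 0 := Nat.cast_ne_zero.mpr ℓ.ker.index_ne_zero_of_finite
  apply Nat.cast_injective (R := ℂ)
  push_cast
  simp only [finrank_hom_eq_sum, char_twist, char_res, MonoidHom.pow_apply,
    Units.val_pow_eq_pow_val]
  calc ∑ j ∈ Finset.range ℓ.ker.index, (Nat.card G : ℂ)⁻¹ *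
        ∑ g, (ℓ g : ℂ) ^ j * A.character g * B.character g⁻¹
      = (Nat.card G : ℂ)⁻¹ * ∑ g, (∑ j ∈ Finset.range ℓ.ker.index, (ℓ g : ℂ) ^ j) *
          (A.character g * B.character g⁻¹) := by
        simp only [← Finset.mul_sum, Finset.sum_mul, mul_assoc]
        rw [Finset.sum_comm]
    _ = (Nat.card G : ℂ)⁻¹ * ∑ g, if g ∈ ℓ.ker then
          (ℓ.ker.index : ℂ) * (A.character g * B.character g⁻¹) else 0 := by
        simp only [ℓ.sum_range_index_ker_pow, ite_mul, zero_mul]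
    _ = _ := by
        rw [Finset.sum_ite, Finset.sum_const_zero, add_zero, ← Finset.mul_sum,
          Finset.sum_subtype (p := (· ∈ ℓ.ker)) _ (by simp), hcard]
        field_simp
        rfl

lemma exists_character_eq_twist_pow [Finite G] (ℓ : G →* ℂˣ) (V W : FDRep ℂ G) [Simple V]
    [Simple W] (hW : ∀ g ∈ ℓ.ker, W.character g = V.character g) :
    ∃ j < ℓ.ker.index, V.character = (twist (ℓ ^ j) W).character := by
  have hres : (res ℓ.ker.subtype W).character = (res ℓ.ker.subtype V).character :=
    funext fun k => hW k k.2
  have hpos : 0 < ∑ j ∈ Finset.range ℓ.ker.index, finrank ℂ (V ⟶ twist (ℓ ^ j) W) := by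
    rw [sum_finrank_hom_twist_pow, finrank_hom_eq_of_character_eq rfl hres]
    exact (finrank_end_eq_one V).symm.trans_le (finrank_hom_le_finrank_hom_res _ V V)
  obtain ⟨j, hj, hne⟩ := Finset.exists_ne_zero_of_sum_ne_zero hpos.ne'
  have := simple_twist (ℓ ^ j) W
  exact ⟨j, Finset.mem_range.mp hj, character_eq_of_finrank_hom_ne_zero hne⟩

lemma eq_zero_of_character_twist_pow_eq [Finite G] (ℓ : G →* ℂˣ) (A : FDRep ℂ G)
    (hA : 0 < finrank ℂ (A ⟶ A))
    (hres : finrank ℂ (res ℓ.ker.subtype A ⟶ res ℓ.ker.subtype A) ≤ 1) {j : ℕ}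
    (hj : j < ℓ.ker.index) (h : (twist (ℓ ^ j) A).character = A.character) : j = 0 := by
  by_contra hj0
  have h0 : (twist (ℓ ^ 0) A).character = A.character := by simp
  have hsub : {0, j} ⊆ Finset.range ℓ.ker.index := by
    simp [Finset.insert_subset_iff, hj, Nat.zero_lt_of_lt hj]
  have := Finset.sum_le_sum_of_subset (f := fun i => finrank ℂ (A ⟶ twist (ℓ ^ i) A)) hsub
  rw [Finset.sum_pair (Ne.symm hj0), sum_finrank_hom_twist_pow,
    finrank_hom_eq_of_character_eq rfl h0, finrank_hom_eq_of_character_eq rfl h] at this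
  omega

theorem character_eq_zero_of_notMem_ker [Finite G] (ℓ : G →* ℂˣ) (hp : ℓ.ker.index.Prime)
    (V : FDRep ℂ G) [Simple V]
    (hred : finrank ℂ (res ℓ.ker.subtype V ⟶ res ℓ.ker.subtype V) ≠ 1) {g : G}
    (hg : g ∉ ℓ.ker) : V.character g = 0 := by
  have hle : ∀ j, finrank ℂ (V ⟶ twist (ℓ ^ j) V) ≤ 1 := fun j =>
    have := simple_twist (ℓ ^ j) V
    finrank_hom_le_one _ _
  have hge : 1 ≤ finrank ℂ (res ℓ.ker.subtype V ⟶ res ℓ.ker.subtype V) :=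
    (finrank_end_eq_one V).symm.trans_le (finrank_hom_le_finrank_hom_res _ V V)
  have hsum := sum_finrank_hom_twist_pow ℓ V V
  rw [← Finset.add_sum_erase _ _ (Finset.mem_range.mpr hp.pos)] at hsum
  have hrest :
      ∑ j ∈ (Finset.range ℓ.ker.index).erase 0, finrank ℂ (V ⟶ twist (ℓ ^ j) V) ≠ 0 := by
    have := hle 0
    omega
  obtain ⟨j, hj, hne⟩ := Finset.exists_ne_zero_of_sum_ne_zero hrest
  obtain ⟨hj0, hjn⟩ := Finset.mem_erase.mp hj
  have := simple_twist (ℓ ^ j) V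
  have hVg := congrFun (character_eq_of_finrank_hom_ne_zero hne) g
  rw [char_twist, MonoidHom.pow_apply, Units.val_pow_eq_pow_val] at hVg
  have hcop : j.Coprime ℓ.ker.index := Nat.Coprime.symm <| (Nat.Prime.coprime_iff_not_dvd hp).mpr
    (Nat.not_dvd_of_pos_of_lt (Nat.pos_of_ne_zero hj0) (Finset.mem_range.mp hjn))
  have hunit : (ℓ g : ℂ) ^ j ≠ 1 := fun h => ℓ.pow_ne_one_of_notMem_ker hcop hg
    (Units.ext (by rw [Units.val_pow_eq_pow_val, h, Units.val_one]))
  have : ((ℓ g : ℂ) ^ j - 1) * V.character g = 0 := by rw [sub_mul, ← hVg]; ring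
  exact (mul_eq_zero.mp this).resolve_left (sub_ne_zero.mpr hunit)

theorem character_eq_of_finrank_end_res_inf_eq_one [Finite G] (ℓ : G →* ℂˣ) {M : Subgroup G}
    (hM : M ⊔ ℓ.ker = ⊤) (V W : FDRep ℂ G) [Simple V] [Simple W]
    (hirr : finrank ℂ (res (M ⊓ ℓ.ker).subtype V ⟶ res (M ⊓ ℓ.ker).subtype V) = 1)
    (hWker : ∀ g ∈ ℓ.ker, W.character g = V.character g)
    (hWM : ∀ g ∈ M, W.character g = V.character g) :
    V.character = W.character := by
  obtain ⟨j, hj, hVW⟩ := exists_character_eq_twist_pow ℓ V W hWker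
  suffices j = 0 by funext g; simpa [this] using congrFun hVW g
  let ℓM := ℓ.comp M.subtype
  let A := res M.subtype V
  let e : ↥(M ⊓ ℓ.ker) →* ℓM.ker :=
    (Subgroup.inclusion inf_le_left).codRestrict ℓM.ker fun x => x.2.2
  have hAker : finrank ℂ (res ℓM.ker.subtype A ⟶ res ℓM.ker.subtype A) ≤ 1 :=
    hirr ▸ finrank_hom_le_finrank_hom_res e _ _
  refine eq_zero_of_character_twist_pow_eq ℓM A ?_ hAker
    ((ℓ.index_ker_comp_subtype hM).symm ▸ hj) ?_
  · exact (finrank_end_eq_one V).symm.trans_le (finrank_hom_le_finrank_hom_res _ V V)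
  · funext m
    have hm := congrFun hVW m
    rw [char_twist, hWM m m.2] at hm
    rw [char_twist, char_res]
    exact hm.symm

end FDRep

theorem fixing_reduction_cor_general
    (G : Type) [Group G] [Finite G] (M N : Subgroup G) [N.Normal]
    (hMN : M ⊔ N = ⊤) (hp : Nat.Prime N.index)
    (σ : G ≃* G) (hσN : ∀ n ∈ N, σ n ∈ N)
    (χ : G → ℂ) (hχ : IsIrrChar G χ)
    (hcase : ¬ IsIrrChar ↥N (fun x : ↥N => χ x) ∨
      IsIrrChar ↥(M ⊓ N) (fun x : ↥(M ⊓ N) => χ x))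
    (hresM : ∀ m ∈ M, χ (σ.symm m) = χ m)
    (hresN : ∀ n ∈ N, χ (σ.symm n) = χ n) :
    ∀ x : G, χ (σ.symm x) = χ x := by
  obtain ⟨V, _, rfl⟩ := hχ
  have : Fact N.index.Prime := ⟨hp⟩
  have : IsCyclic (G ⧸ N) := isCyclic_of_prime_card (p := N.index) rfl
  obtain ⟨ℓ, rfl⟩ := N.exists_monoidHom_units_ker_eq
  rcases hcase with hred | hirr
  · have hzero : ∀ {g}, g ∉ ℓ.ker → V.character g = 0 :=
      FDRep.character_eq_zero_of_notMem_ker ℓ hp V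
        fun h => hred ((FDRep.isIrrChar_character_iff _).mpr h)
    intro x
    by_cases hx : x ∈ ℓ.ker
    · exact hresN x hx
    · rw [hzero hx, hzero fun h => hx (by simpa using hσN _ h)]
  · have : Simple (V.res σ.symm.toMonoidHom) := FDRep.simple_res_mulEquiv σ.symm V
    have hVW := FDRep.character_eq_of_finrank_end_res_inf_eq_one ℓ hMN V
      (V.res σ.symm.toMonoidHom) ((FDRep.isIrrChar_character_iff _).mp hirr) hresN hresM
    exact fun x => (congrFun hVW x).symm

/-- **Corollary (FixingReductionCor).**  Let `G` be finite with normal subgroups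
`M`, `N`, `G = MN`, and `G/N` of prime order.  Let `σ` be an automorphism of `G`
stabilizing `M` and `N`, and `χ` an irreducible complex character of `G`.  If the
restriction of `χ` to `N` is reducible or the restriction to `M ⊓ N` is irreducible,
and the restrictions of `χ` to `M` and to `N` are `σ`-stable, then `χ` is
`σ`-stable (where `(σχ)(x) = χ (σ⁻¹ x)`). -/
theorem fixing_reduction_cor
    (G : Type) [Group G] [Finite G] (M N : Subgroup G) [M.Normal] [N.Normal]
    (hMN : M ⊔ N = ⊤) (hp : Nat.Prime N.index)
    (σ : G ≃* G) (hσM : ∀ m ∈ M, σ m ∈ M) (hσN : ∀ n ∈ N, σ n ∈ N)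
    (χ : G → ℂ) (hχ : IsIrrChar G χ)
    (hcase : ¬ IsIrrChar ↥N (fun x : ↥N => χ x) ∨
      IsIrrChar ↥(M ⊓ N) (fun x : ↥(M ⊓ N) => χ x))
    (hresM : ∀ m ∈ M, χ (σ.symm m) = χ m)
    (hresN : ∀ n ∈ N, χ (σ.symm n) = χ n) :
    ∀ x : G, χ (σ.symm x) = χ x :=
  fixing_reduction_cor_general G M N hMN hp σ hσN χ hχ hcase hresM hresN
end

section
/- Let m ≤ n be positive integers, K a field of characteristic zero, U an m×n matrix over K of full rank, and M ∈ GL_m(K). Suppose P, P' are m×m permutation matrices and Q an n×n permutation matrix with UQ = PU and MUQ = P'MU. Then the permutations corresponding to P and P' have the same number of fixed points. -/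
namespace Matrix

variable {ι m n R : Type*} [Fintype m] [CommRing R]

theorem eq_of_mul_eq_mul_of_linearIndependent_rows {U : Matrix m n R}
    (hU : LinearIndependent R fun i => U i) {A B : Matrix ι m R} (h : A * U = B * U) :
    A = B :=
  funext fun i => vecMul_injective_iff.2 hU (congrFun h i)

theorem mul_eq_mul_of_intertwines_linearIndependent_rows [Fintype n] {U : Matrix m n R}
    (hU : LinearIndependent R fun i => U i) {M P P' : Matrix m m R} {Q : Matrix n n R}
    (h1 : U * Q = P * U) (h2 : M * U * Q = P' * (M * U)) : P' * M = M * P :=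
  eq_of_mul_eq_mul_of_linearIndependent_rows hU <| by
    rw [Matrix.mul_assoc, ← h2, Matrix.mul_assoc, h1, Matrix.mul_assoc]

end Matrix

theorem Equiv.Perm.trace_permMatrix_eq_card_filter {m R : Type*} [Fintype m] [DecidableEq m]
    [AddCommMonoidWithOne R] (σ : Equiv.Perm m) :
    (σ.permMatrix R).trace = (Finset.univ.filter fun i => σ i = i).card := by
  rw [Matrix.trace_permutation, ← Set.ncard_coe_finset, Finset.coe_filter]
  simp only [Finset.mem_univ, true_and]
  rfl

theorem brauer_permutation_fixed_points_general
    (m n : ℕ) (K : Type*) [Field K] [CharZero K]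
    (U : Matrix (Fin m) (Fin n) K)
    (hU : LinearIndependent K (fun i : Fin m => U i))
    (M : Matrix (Fin m) (Fin m) K) (hM : IsUnit M.det)
    (p p' : Equiv.Perm (Fin m)) (q : Equiv.Perm (Fin n))
    (h1 : U * q.permMatrix K = p.permMatrix K * U)
    (h2 : M * U * q.permMatrix K = p'.permMatrix K * (M * U)) :
    (Finset.univ.filter fun i : Fin m => p i = i).card
      = (Finset.univ.filter fun i : Fin m => p' i = i).card := by
  have hconj : p'.permMatrix K = M * p.permMatrix K * M⁻¹ := by
    rw [← Matrix.mul_eq_mul_of_intertwines_linearIndependent_rows hU h1 h2,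
      Matrix.mul_nonsing_inv_cancel_right _ _ hM]
  have htrace : (p.permMatrix K).trace = (p'.permMatrix K).trace := by
    rw [hconj, Matrix.trace_conj ((Matrix.isUnit_iff_isUnit_det M).2 hM)]
  rw [Equiv.Perm.trace_permMatrix_eq_card_filter,
    Equiv.Perm.trace_permMatrix_eq_card_filter] at htrace
  exact_mod_cast htrace

/-- **Brauer's permutation lemma, fixed-point version.**  Let `m ≤ n`, `K` a field
of characteristic zero, `U` an `m × n` matrix over `K` of full rank (linearly
independent rows), and `M ∈ GL_m(K)`.  If `P`, `P'`, `Q` are permutation matrices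
of permutations `p`, `p'`, `q` with `U Q = P U` and `M U Q = P' M U`, then `p` and
`p'` have the same number of fixed points. -/
theorem brauer_permutation_fixed_points
    (m n : ℕ) (hm : 0 < m) (hmn : m ≤ n) (K : Type*) [Field K] [CharZero K]
    (U : Matrix (Fin m) (Fin n) K)
    (hU : LinearIndependent K (fun i : Fin m => U i))
    (M : Matrix (Fin m) (Fin m) K) (hM : IsUnit M.det)
    (p p' : Equiv.Perm (Fin m)) (q : Equiv.Perm (Fin n))
    (h1 : U * q.permMatrix K = p.permMatrix K * U)
    (h2 : M * U * q.permMatrix K = p'.permMatrix K * (M * U)) :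
    (Finset.univ.filter fun i : Fin m => p i = i).card
      = (Finset.univ.filter fun i : Fin m => p' i = i).card :=
  brauer_permutation_fixed_points_general m n K U hU M hM p p' q h1 h2
end

section
/- Let G be a group with subgroups H₁, H₂ such that [H₁,H₂] = 1, and set Z = H₁ ∩ H₂ and H = H₁H₂. Let U₁ ≤ H₁ and U₂ ≤ H₂ with Z ≤ U₁ and Z ≤ U₂, and set U = U₁U₂. Then N_H(U) = N_{H₁}(U₁) · N_{H₂}(U₂). -/
/-!
Since `Z = H₁ ∩ H₂ ≤ U₁`, Dedekind's law gives `U ∩ H₁ = U₁`. An element of `H` normalizes `H₁`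
(the factor from `H₂` centralizes it), so an element of `N_H(U)` normalizes `U ∩ H₁ = U₁`, and
likewise `U₂`. Writing it as `ab` with `a ∈ H₁`, `b ∈ H₂`, the factor `b` centralizes `U₁`, so `a`
normalizes `U₁`; symmetrically `b` normalizes `U₂`. Conversely, `N_{H₁}(U₁)` centralizes `U₂`, so it
normalizes `U₁U₂`, and likewise for `N_{H₂}(U₂)`.
-/

open scoped Pointwise

namespace Subgroup

variable {G : Type*} [Group G] {H₁ H₂ U₁ U₂ : Subgroup G}

theorem centralizer_le_normalizer_of_le (h : U₁ ≤ H₁) :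
    centralizer (H₁ : Set G) ≤ normalizer (U₁ : Set G) :=
  (centralizer_le h).trans (centralizer_le_normalizer _)

theorem sup_inf_eq_left_of_inf_le (hU₂N : U₂ ≤ normalizer (U₁ : Set G)) (hU₁ : U₁ ≤ H₁)
    (hU₂ : U₂ ≤ H₂) (hZ : H₁ ⊓ H₂ ≤ U₁) : (U₁ ⊔ U₂) ⊓ H₁ = U₁ := by
  refine le_antisymm (fun x hx ↦ ?_) (le_inf le_sup_left hU₁)
  obtain ⟨hxU, hxH⟩ := mem_inf.mp hx
  rw [← SetLike.mem_coe, coe_mul_of_right_le_normalizer_left U₁ U₂ hU₂N] at hxU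
  obtain ⟨u₁, hu₁, u₂, hu₂, rfl⟩ := hxU
  have hu₂H₁ : u₂ ∈ H₁ := by simpa using mul_mem (inv_mem (hU₁ hu₁)) hxH
  exact mul_mem hu₁ (hZ ⟨hu₂H₁, hU₂ hu₂⟩)

theorem sup_inf_normalizer_sup_le_normalizer_left (hcomm : H₂ ≤ centralizer (H₁ : Set G))
    (hU₁ : U₁ ≤ H₁) (hU₂ : U₂ ≤ H₂) (hZ : H₁ ⊓ H₂ ≤ U₁) :
    (H₁ ⊔ H₂) ⊓ normalizer ((U₁ ⊔ U₂ : Subgroup G) : Set G) ≤ normalizer (U₁ : Set G) := by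
  have hU₂N : U₂ ≤ normalizer (U₁ : Set G) :=
    (hU₂.trans hcomm).trans (centralizer_le_normalizer_of_le hU₁)
  have hH : H₁ ⊔ H₂ ≤ normalizer (H₁ : Set G) :=
    sup_le le_normalizer (hcomm.trans (centralizer_le_normalizer _))
  calc (H₁ ⊔ H₂) ⊓ normalizer ((U₁ ⊔ U₂ : Subgroup G) : Set G)
      ≤ normalizer ((U₁ ⊔ U₂ : Subgroup G) : Set G) ⊓ normalizer (H₁ : Set G) := by
        rw [inf_comm]; exact inf_le_inf_left _ hH
    _ ≤ normalizer (((U₁ ⊔ U₂) ⊓ H₁ : Subgroup G) : Set G) := inf_normalizer_le_normalizer_inf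
    _ = normalizer (U₁ : Set G) := by rw [sup_inf_eq_left_of_inf_le hU₂N hU₁ hU₂ hZ]

theorem inf_normalizer_le_normalizer_sup_left (hcomm : H₂ ≤ centralizer (H₁ : Set G))
    (hU₂ : U₂ ≤ H₂) :
    H₁ ⊓ normalizer (U₁ : Set G) ≤ normalizer ((U₁ ⊔ U₂ : Subgroup G) : Set G) := by
  have hH₁ : H₁ ≤ normalizer (U₂ : Set G) :=
    (le_centralizer_iff.mp hcomm).trans (centralizer_le_normalizer_of_le hU₂)
  rw [inf_comm]
  exact (inf_le_inf_left _ hH₁).trans (normalizer_inf_normalizer_le_normalizer_sup U₁ U₂)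

theorem mul_mem_normalizer_sup_iff (hcomm : H₂ ≤ centralizer (H₁ : Set G))
    (hU₁ : U₁ ≤ H₁) (hU₂ : U₂ ≤ H₂)
    (hZ₁ : H₁ ⊓ H₂ ≤ U₁) (hZ₂ : H₁ ⊓ H₂ ≤ U₂) {a b : G} (ha : a ∈ H₁) (hb : b ∈ H₂) :
    a * b ∈ normalizer ((U₁ ⊔ U₂ : Subgroup G) : Set G) ↔
      a ∈ normalizer (U₁ : Set G) ∧ b ∈ normalizer (U₂ : Set G) := by
  have hcomm' : H₁ ≤ centralizer (H₂ : Set G) := le_centralizer_iff.mp hcomm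
  constructor
  · intro hN
    have hab : a * b ∈ H₁ ⊔ H₂ := mul_mem (mem_sup_left ha) (mem_sup_right hb)
    have h₁ : a * b ∈ normalizer (U₁ : Set G) :=
      sup_inf_normalizer_sup_le_normalizer_left hcomm hU₁ hU₂ hZ₁ ⟨hab, hN⟩
    have h₂ : a * b ∈ normalizer (U₂ : Set G) := by
      rw [sup_comm] at hab hN
      exact sup_inf_normalizer_sup_le_normalizer_left hcomm' hU₂ hU₁ (inf_comm H₁ H₂ ▸ hZ₂)
        ⟨hab, hN⟩
    have hbN : b ∈ normalizer (U₁ : Set G) := centralizer_le_normalizer_of_le hU₁ (hcomm hb)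
    have haN : a ∈ normalizer (U₂ : Set G) := centralizer_le_normalizer_of_le hU₂ (hcomm' ha)
    exact ⟨by simpa using mul_mem h₁ (inv_mem hbN), by simpa using mul_mem (inv_mem haN) h₂⟩
  · rintro ⟨haN, hbN⟩
    refine mul_mem (inf_normalizer_le_normalizer_sup_left hcomm hU₂ ⟨ha, haN⟩) ?_
    rw [sup_comm]
    exact inf_normalizer_le_normalizer_sup_left hcomm' hU₁ ⟨hb, hbN⟩

end Subgroup

open Subgroup in
/-- **Central products (normalizers).**  Let `G` be a group with subgroups `H₁`, `H₂`
commuting elementwise (`[H₁,H₂] = 1`), let `Z = H₁ ⊓ H₂`, `H = H₁H₂`, and let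
`U₁ ≤ H₁`, `U₂ ≤ H₂` with `Z ≤ U₁`, `Z ≤ U₂`, `U = U₁U₂`.  Then
`N_H(U) = N_{H₁}(U₁) · N_{H₂}(U₂)`. -/
theorem normalizer_of_central_product
    {G : Type*} [Group G] (H₁ H₂ U₁ U₂ : Subgroup G)
    (hcomm : ∀ a ∈ H₁, ∀ b ∈ H₂, a * b = b * a)
    (hU₁ : U₁ ≤ H₁) (hU₂ : U₂ ≤ H₂)
    (hZ₁ : H₁ ⊓ H₂ ≤ U₁) (hZ₂ : H₁ ⊓ H₂ ≤ U₂) :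
    (((H₁ ⊔ H₂) ⊓ Subgroup.normalizer ((U₁ ⊔ U₂ : Subgroup G) : Set G) : Subgroup G) : Set G)
      = ((H₁ ⊓ Subgroup.normalizer (U₁ : Set G) : Subgroup G) : Set G)
          * ((H₂ ⊓ Subgroup.normalizer (U₂ : Set G) : Subgroup G) : Set G) := by
  have hcomm' : H₂ ≤ centralizer (H₁ : Set G) := fun b hb a ha ↦ hcomm a ha b hb
  have hsup : ((H₁ ⊔ H₂ : Subgroup G) : Set G) = H₁ * H₂ :=
    coe_mul_of_left_le_normalizer_right H₁ H₂
      ((le_centralizer_iff.mp hcomm').trans (centralizer_le_normalizer _))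
  ext x
  constructor
  · intro hx
    obtain ⟨hxH, hxN⟩ := mem_inf.mp hx
    rw [← SetLike.mem_coe, hsup] at hxH
    obtain ⟨a, ha, b, hb, rfl⟩ := hxH
    obtain ⟨haN, hbN⟩ := (mul_mem_normalizer_sup_iff hcomm' hU₁ hU₂ hZ₁ hZ₂ ha hb).mp hxN
    exact ⟨a, ⟨ha, haN⟩, b, ⟨hb, hbN⟩, rfl⟩
  · rintro ⟨a, ⟨ha, haN⟩, b, ⟨hb, hbN⟩, rfl⟩
    exact ⟨mul_mem (mem_sup_left ha) (mem_sup_right hb),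
      (mul_mem_normalizer_sup_iff hcomm' hU₁ hU₂ hZ₁ hZ₂ ha hb).mpr ⟨haN, hbN⟩⟩
end

section
/- Let G be a group with subgroups H₁, H₂ such that [H₁,H₂] = 1 and H₁ is abelian, and set Z = H₁ ∩ H₂, H = H₁H₂. Let U₁ ≤ H₁, U₂ ≤ H₂ with Z ≤ U₁, Z ≤ U₂ and U = U₁U₂. Then C_H(U) = H₁ · C_{H₂}(U₂), and the outer automizer Out_H(U) := N_H(U)/(U·C_H(U)) is isomorphic to Out_{H₂}(U₂) := N_{H₂}(U₂)/(U₂·C_{H₂}(U₂)). -/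
/-! Since `H₁` centralizes `H₂` and `U`, the set `H₁H₂` is a subgroup and every subgroup
`X ≥ H₁` satisfies the modular law `H₁H₂ ∩ X = H₁(H₂ ∩ X)`. For `X = C(U)` and `X = N(U)`
this gives `C_H(U) = H₁ C_{H₂}(U₂)` and `N_H(U) = H₁ N_{H₂}(U₂)`; the latter because an
element of `H₂` normalizing `U` normalizes `U ∩ H₂ = U₂`, which is where `Z ≤ U₂` enters.
Hence `U C_H(U) = H₁ · U₂C_{H₂}(U₂)`, and since `H₁` meets `N_{H₂}(U₂)` inside `Z ≤ U₂`,
the inclusion `N_{H₂}(U₂) ≤ N_H(U)` induces `Out_{H₂}(U₂) ≅ Out_H(U)`. -/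

variable {G : Type*} [Group G]

/-- `N_L(K)`, the normalizer of `K` in `L`. -/
abbrev relNormalizer (L K : Subgroup G) : Subgroup G := L ⊓ Subgroup.normalizer (K : Set G)

/-- `K · C_L(K)`, the product of `K` with the centralizer of `K` in `L`
(a subgroup, since `C_L(K)` centralizes `K`). -/
abbrev centProdSub (L K : Subgroup G) : Subgroup G :=
  K ⊔ (L ⊓ Subgroup.centralizer (K : Set G))

lemma centProdSub_le_comap_conj (L K : Subgroup G) {c : G}
    (hcL : c ∈ L) (hcN : c ∈ Subgroup.normalizer (K : Set G)) :
    centProdSub L K ≤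
      Subgroup.comap (MulAut.conj c : G ≃* G).toMonoidHom (centProdSub L K) := by
  apply sup_le
  · intro k hk
    rw [Subgroup.mem_comap]
    have h : c * k * c⁻¹ ∈ K := (Subgroup.mem_normalizer_iff.mp hcN k).mp hk
    have h' : c * k * c⁻¹ ∈ centProdSub L K :=
      (le_sup_left : K ≤ centProdSub L K) h
    simpa [MulAut.conj_apply] using h'
  · intro y hy
    rw [Subgroup.mem_inf] at hy
    obtain ⟨hyL, hyC⟩ := hy
    rw [Subgroup.mem_comap]
    have hL : c * y * c⁻¹ ∈ L := mul_mem (mul_mem hcL hyL) (inv_mem hcL)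
    have hC : c * y * c⁻¹ ∈ Subgroup.centralizer (K : Set G) := by
      rw [Subgroup.mem_centralizer_iff]
      intro k hk
      have hk' : c⁻¹ * k * c ∈ K := by
        have h := (Subgroup.mem_normalizer_iff.mp (inv_mem hcN) k).mp hk
        simpa using h
      have hcomm := Subgroup.mem_centralizer_iff.mp hyC (c⁻¹ * k * c) hk'
      calc k * (c * y * c⁻¹) = c * ((c⁻¹ * k * c) * y) * c⁻¹ := by group
        _ = c * (y * (c⁻¹ * k * c)) * c⁻¹ := by rw [hcomm]
        _ = (c * y * c⁻¹) * k := by group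
    have h' : c * y * c⁻¹ ∈ centProdSub L K :=
      (le_sup_right : L ⊓ Subgroup.centralizer (K : Set G) ≤ centProdSub L K) ⟨hL, hC⟩
    simpa [MulAut.conj_apply] using h'

instance centProdSub_subgroupOf_normal (L K : Subgroup G) :
    ((centProdSub L K).subgroupOf (relNormalizer L K)).Normal := by
  constructor
  intro n hn g
  rw [Subgroup.mem_subgroupOf] at hn ⊢
  have hg := g.2
  rw [Subgroup.mem_inf] at hg
  have h := centProdSub_le_comap_conj L K hg.1 hg.2 hn
  rw [Subgroup.mem_comap] at h
  simp only [MulEquiv.coe_toMonoidHom, MulAut.conj_apply] at h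
  simpa using h

namespace Subgroup

theorem sup_inf_assoc_of_le_normalizer {H K X : Subgroup G} (hHK : H ≤ normalizer (K : Set G))
    (hHX : H ≤ X) : (H ⊔ K) ⊓ X = H ⊔ K ⊓ X := by
  refine le_antisymm ?_ (sup_le (le_inf le_sup_left hHX) (inf_le_inf_right _ le_sup_right))
  intro x hxKX
  obtain ⟨hx, hxX⟩ := mem_inf.1 hxKX
  rw [← SetLike.mem_coe, coe_mul_of_left_le_normalizer_right H K hHK] at hx
  obtain ⟨h, hh, k, hk, rfl⟩ := hx
  have hkX : k ∈ X := by simpa using mul_mem (inv_mem (hHX hh)) hxX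
  exact mul_mem_sup hh ⟨hk, hkX⟩

theorem sup_inf_eq_right_of_le_normalizer {A B M : Subgroup G} (hBA : B ≤ normalizer (A : Set G))
    (hBM : B ≤ M) (hAM : A ⊓ M ≤ B) : (A ⊔ B) ⊓ M = B := by
  rw [sup_comm, sup_inf_assoc_of_le_normalizer hBA hBM, sup_eq_left.2 hAM]

theorem centralizer_sup (A B : Subgroup G) :
    centralizer ((A ⊔ B : Subgroup G) : Set G) =
      centralizer (A : Set G) ⊓ centralizer (B : Set G) :=
  eq_of_forall_le_iff fun K => by simp only [le_centralizer_iff, sup_le_iff, le_inf_iff]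

theorem normalizer_inf_normalizer_le_normalizer_inf (A B : Subgroup G) :
    normalizer (A : Set G) ⊓ normalizer (B : Set G) ≤
      normalizer ((A ⊓ B : Subgroup G) : Set G) := by
  intro g hg
  obtain ⟨hA, hB⟩ := mem_inf.1 hg
  rw [mem_normalizer_iff] at hA hB ⊢
  intro h
  simp only [mem_inf, hA h, hB h]

theorem nonempty_quotient_mulEquiv_of_eq_sup {A M C M₂ C₂ : Subgroup G}
    [(C.subgroupOf M).Normal] [(C₂.subgroupOf M₂).Normal]
    (hA : M₂ ≤ normalizer (A : Set G)) (hC₂ : C₂ ≤ M₂) (hAC₂ : A ⊓ M₂ ≤ C₂)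
    (hM : M = A ⊔ M₂) (hC : C = A ⊔ C₂) :
    Nonempty (M ⧸ C.subgroupOf M ≃* M₂ ⧸ C₂.subgroupOf M₂) := by
  subst hM hC
  let ψ : M₂ →* (A ⊔ M₂ : Subgroup G) ⧸ (A ⊔ C₂).subgroupOf (A ⊔ M₂) :=
    (QuotientGroup.mk' _).comp (inclusion le_sup_right)
  have hψ : Function.Surjective ψ := by
    rintro ⟨m, hm⟩
    rw [← SetLike.mem_coe, coe_mul_of_right_le_normalizer_left A M₂ hA] at hm
    obtain ⟨a, ha, b, hb, rfl⟩ := hm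
    refine ⟨⟨b, hb⟩, QuotientGroup.eq.2 ?_⟩
    have hconj : b⁻¹ * (a * b) ∈ A := by
      simpa [mul_assoc] using (mem_normalizer_iff''.1 (hA hb) a).1 ha
    simpa [mem_subgroupOf] using mem_sup_left hconj
  have hker : C₂.subgroupOf M₂ = ψ.ker := by
    rw [← MonoidHom.comap_ker, QuotientGroup.ker_mk', comap_inclusion_subgroupOf, subgroupOf_inj,
      sup_inf_eq_right_of_le_normalizer (hC₂.trans hA) hC₂ hAC₂, inf_of_le_left hC₂]
  exact ⟨((QuotientGroup.quotientMulEquivOfEq hker).trans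
    (QuotientGroup.quotientKerEquivOfSurjective ψ hψ)).symm⟩

theorem centProdSub_le_relNormalizer {L K : Subgroup G} (hKL : K ≤ L) :
    centProdSub L K ≤ relNormalizer L K :=
  sup_le (le_inf hKL le_normalizer) (inf_le_inf_left _ (centralizer_le_normalizer _))

section CentralProduct

variable {H₁ H₂ U₁ U₂ : Subgroup G}

theorem le_centralizer_sup_of_commute (hcomm : H₂ ≤ centralizer (H₁ : Set G))
    (hH₁U₁ : H₁ ≤ centralizer (U₁ : Set G)) (hU₂ : U₂ ≤ H₂) :
    H₁ ≤ centralizer ((U₁ ⊔ U₂ : Subgroup G) : Set G) := by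
  rw [centralizer_sup]
  exact le_inf hH₁U₁ (le_centralizer_iff.2 (hU₂.trans hcomm))

theorem sup_inf_centralizer_sup_of_commute (hcomm : H₂ ≤ centralizer (H₁ : Set G))
    (hH₁U₁ : H₁ ≤ centralizer (U₁ : Set G)) (hU₁ : U₁ ≤ H₁) (hU₂ : U₂ ≤ H₂) :
    (H₁ ⊔ H₂) ⊓ centralizer ((U₁ ⊔ U₂ : Subgroup G) : Set G) =
      H₁ ⊔ H₂ ⊓ centralizer (U₂ : Set G) := by
  rw [sup_inf_assoc_of_le_normalizer
      ((le_centralizer_iff.1 hcomm).trans (centralizer_le_normalizer _))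
      (le_centralizer_sup_of_commute hcomm hH₁U₁ hU₂),
    centralizer_sup, ← inf_assoc, inf_of_le_left (hcomm.trans (centralizer_le hU₁))]

theorem sup_inf_normalizer_sup_of_commute (hcomm : H₂ ≤ centralizer (H₁ : Set G))
    (hH₁U₁ : H₁ ≤ centralizer (U₁ : Set G)) (hU₁ : U₁ ≤ H₁) (hU₂ : U₂ ≤ H₂)
    (hZ : H₁ ⊓ H₂ ≤ U₂) :
    (H₁ ⊔ H₂) ⊓ normalizer ((U₁ ⊔ U₂ : Subgroup G) : Set G) =
      H₁ ⊔ H₂ ⊓ normalizer (U₂ : Set G) := by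
  have hH₂U₁ : H₂ ≤ normalizer (U₁ : Set G) :=
    (hcomm.trans (centralizer_le hU₁)).trans (centralizer_le_normalizer _)
  have hUH₂ : (U₁ ⊔ U₂) ⊓ H₂ = U₂ :=
    sup_inf_eq_right_of_le_normalizer (hU₂.trans hH₂U₁) hU₂ ((inf_le_inf_right _ hU₁).trans hZ)
  rw [sup_inf_assoc_of_le_normalizer
      ((le_centralizer_iff.1 hcomm).trans (centralizer_le_normalizer _))
      ((le_centralizer_sup_of_commute hcomm hH₁U₁ hU₂).trans (centralizer_le_normalizer _))]
  congr 1
  refine le_antisymm (le_inf inf_le_left ?_) (le_inf inf_le_left ?_)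
  · intro x hx
    have hxN := normalizer_inf_normalizer_le_normalizer_inf _ _ ⟨hx.2, le_normalizer hx.1⟩
    rwa [hUH₂] at hxN
  · exact fun x hx => normalizer_inf_normalizer_le_normalizer_sup U₁ U₂ ⟨hH₂U₁ hx.1, hx.2⟩

theorem centProdSub_sup_of_commute (hcomm : H₂ ≤ centralizer (H₁ : Set G))
    (hH₁U₁ : H₁ ≤ centralizer (U₁ : Set G)) (hU₁ : U₁ ≤ H₁) (hU₂ : U₂ ≤ H₂) :
    centProdSub (H₁ ⊔ H₂) (U₁ ⊔ U₂) = H₁ ⊔ centProdSub H₂ U₂ := by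
  unfold centProdSub
  rw [sup_inf_centralizer_sup_of_commute hcomm hH₁U₁ hU₁ hU₂, sup_comm U₁, sup_assoc,
    ← sup_assoc U₁, sup_eq_right.2 hU₁, sup_left_comm]

end CentralProduct

end Subgroup

theorem centralizer_and_out_of_central_product_general
    (H₁ H₂ U₁ U₂ : Subgroup G)
    (hcomm : ∀ a ∈ H₁, ∀ b ∈ H₂, a * b = b * a)
    (habel : ∀ a ∈ H₁, ∀ b ∈ H₁, a * b = b * a)
    (hU₁ : U₁ ≤ H₁) (hU₂ : U₂ ≤ H₂)
    (hZ₂ : H₁ ⊓ H₂ ≤ U₂) :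
    (H₁ ⊔ H₂) ⊓ Subgroup.centralizer ((U₁ ⊔ U₂ : Subgroup G) : Set G)
        = H₁ ⊔ (H₂ ⊓ Subgroup.centralizer (U₂ : Set G)) ∧
      Nonempty
        ((↥(relNormalizer (H₁ ⊔ H₂) (U₁ ⊔ U₂)) ⧸
            (centProdSub (H₁ ⊔ H₂) (U₁ ⊔ U₂)).subgroupOf
              (relNormalizer (H₁ ⊔ H₂) (U₁ ⊔ U₂))) ≃*
          (↥(relNormalizer H₂ U₂) ⧸
            (centProdSub H₂ U₂).subgroupOf (relNormalizer H₂ U₂))) := by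
  have hH₂ : H₂ ≤ Subgroup.centralizer (H₁ : Set G) := fun b hb =>
    Subgroup.mem_centralizer_iff.2 fun a ha => hcomm a ha b hb
  have hH₁U₁ : H₁ ≤ Subgroup.centralizer (U₁ : Set G) := fun a ha =>
    Subgroup.mem_centralizer_iff.2 fun u hu => habel u (hU₁ hu) a ha
  refine ⟨Subgroup.sup_inf_centralizer_sup_of_commute hH₂ hH₁U₁ hU₁ hU₂,
    Subgroup.nonempty_quotient_mulEquiv_of_eq_sup ?_
      (Subgroup.centProdSub_le_relNormalizer hU₂) ?_
      (Subgroup.sup_inf_normalizer_sup_of_commute hH₂ hH₁U₁ hU₁ hU₂ hZ₂)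
      (Subgroup.centProdSub_sup_of_commute hH₂ hH₁U₁ hU₁ hU₂)⟩
  · exact inf_le_left.trans (hH₂.trans (Subgroup.centralizer_le_normalizer _))
  · exact (inf_le_inf_left _ inf_le_left).trans (hZ₂.trans le_sup_left)

/-- **Central products (centralizers and outer automizers).**  Let `H₁`, `H₂` be
subgroups of `G` with `[H₁,H₂] = 1` and `H₁` abelian; set `Z = H₁ ⊓ H₂`,
`H = H₁H₂`.  Let `U₁ ≤ H₁`, `U₂ ≤ H₂` with `Z ≤ U₁`, `Z ≤ U₂`, `U = U₁U₂`.
Then `C_H(U) = H₁ · C_{H₂}(U₂)` and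
`Out_H(U) = N_H(U)/(U·C_H(U)) ≅ Out_{H₂}(U₂) = N_{H₂}(U₂)/(U₂·C_{H₂}(U₂))`. -/
theorem centralizer_and_out_of_central_product
    (H₁ H₂ U₁ U₂ : Subgroup G)
    (hcomm : ∀ a ∈ H₁, ∀ b ∈ H₂, a * b = b * a)
    (habel : ∀ a ∈ H₁, ∀ b ∈ H₁, a * b = b * a)
    (hU₁ : U₁ ≤ H₁) (hU₂ : U₂ ≤ H₂)
    (hZ₁ : H₁ ⊓ H₂ ≤ U₁) (hZ₂ : H₁ ⊓ H₂ ≤ U₂) :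
    (H₁ ⊔ H₂) ⊓ Subgroup.centralizer ((U₁ ⊔ U₂ : Subgroup G) : Set G)
        = H₁ ⊔ (H₂ ⊓ Subgroup.centralizer (U₂ : Set G)) ∧
      Nonempty
        ((↥(relNormalizer (H₁ ⊔ H₂) (U₁ ⊔ U₂)) ⧸
            (centProdSub (H₁ ⊔ H₂) (U₁ ⊔ U₂)).subgroupOf
              (relNormalizer (H₁ ⊔ H₂) (U₁ ⊔ U₂))) ≃*
          (↥(relNormalizer H₂ U₂) ⧸
            (centProdSub H₂ U₂).subgroupOf (relNormalizer H₂ U₂))) :=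
  centralizer_and_out_of_central_product_general H₁ H₂ U₁ U₂ hcomm habel hU₁ hU₂ hZ₂
end

section
/- Let p be a prime, R a finite p-group, and Q a normal abelian subgroup of R of index p such that the commutator subgroup [R,R] is contained in Q, [R,R] is not contained in the center Z(R), and Q = C_R([R,R]). Then Q is the unique maximal abelian normal subgroup of R; in particular Q is characteristic in R. -/
/-!
If an abelian normal subgroup `A` is not contained in `Q`, then `AQ = R` because `Q` has prime
index, so `R/A` is a quotient of the abelian group `Q` and `[R,R] ≤ A`. As `A` is abelian it then
centralizes `[R,R]`, i.e. `A ≤ C_R([R,R]) = Q`, a contradiction. Automorphisms permute the abelian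
normal subgroups, so the largest one is characteristic.
-/

namespace Subgroup

variable {G : Type*} [Group G]

theorem sup_eq_top_of_index_prime {H K : Subgroup G} (hH : H.index.Prime) (hKH : ¬K ≤ H) :
    K ⊔ H = ⊤ := by
  have hunit := hH.isUnit_or_isUnit (relIndex_mul_index (le_sup_right : H ≤ K ⊔ H)).symm
  rcases hunit with hrel | hidx
  · exact absurd (le_sup_left.trans (relIndex_eq_one.mp (Nat.isUnit_iff.mp hrel))) hKH
  · exact index_eq_one.mp (Nat.isUnit_iff.mp hidx)

theorem commutator_le_of_not_le_of_index_prime {A Q : Subgroup G} [A.Normal]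
    [IsMulCommutative Q] (hQ : Q.index.Prime) (hAQ : ¬A ≤ Q) : _root_.commutator G ≤ A :=
  Normal.commutator_le_of_self_sup_commutative_eq_top (sup_eq_top_of_index_prime hQ hAQ) ‹_›

theorem le_of_isMulCommutative_of_index_prime {A Q : Subgroup G} [A.Normal] [IsMulCommutative A]
    [IsMulCommutative Q] (hQ : Q.index.Prime)
    (hcent : centralizer (_root_.commutator G : Set G) ≤ Q) : A ≤ Q := by
  by_contra hAQ
  have hcomm : _root_.commutator G ≤ A := commutator_le_of_not_le_of_index_prime hQ hAQ
  exact hAQ ((le_centralizer_iff.mpr (hcomm.trans (le_centralizer A))).trans hcent)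

theorem characteristic_of_forall_isMulCommutative_normal_le (Q : Subgroup G) [Q.Normal]
    [IsMulCommutative Q] (hmax : ∀ A : Subgroup G, A.Normal → IsMulCommutative A → A ≤ Q) :
    Q.Characteristic :=
  characteristic_iff_map_le.mpr fun φ ↦
    hmax _ (Normal.map ‹_› φ.toMonoidHom φ.surjective) inferInstance

end Subgroup

theorem unique_maximal_abelian_normal_general
    (p : ℕ) (hp : p.Prime) (R : Type*) [Group R]
    (Q : Subgroup R) [Q.Normal]
    (hab : ∀ a ∈ Q, ∀ b ∈ Q, a * b = b * a)
    (hidx : Q.index = p)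
    (hcent : Q = Subgroup.centralizer ((commutator R : Subgroup R) : Set R)) :
    (∀ A : Subgroup R, A.Normal → (∀ a ∈ A, ∀ b ∈ A, a * b = b * a) → A ≤ Q) ∧
      Q.Characteristic := by
  have : IsMulCommutative Q := .of_setLike_mul_comm hab
  have hmax (A : Subgroup R) (_ : A.Normal) (_ : IsMulCommutative A) : A ≤ Q :=
    Subgroup.le_of_isMulCommutative_of_index_prime (hidx ▸ hp) hcent.ge
  exact ⟨fun A hA hAab ↦ hmax A hA (.of_setLike_mul_comm hAab),
    Q.characteristic_of_forall_isMulCommutative_normal_le hmax⟩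

/-- **Unique maximal abelian normal subgroup.**  Let `p` be a prime, `R` a finite
`p`-group, and `Q ⊴ R` abelian of index `p` with `[R,R] ≤ Q`, `[R,R] ⊄ Z(R)`, and
`Q = C_R([R,R])`.  Then `Q` is the unique maximal abelian normal subgroup of `R`
(equivalently, every abelian normal subgroup of `R` is contained in `Q`); in
particular `Q` is characteristic in `R`. -/
theorem unique_maximal_abelian_normal
    (p : ℕ) (hp : p.Prime) (R : Type*) [Group R] [Finite R] (hR : IsPGroup p R)
    (Q : Subgroup R) [Q.Normal]
    (hab : ∀ a ∈ Q, ∀ b ∈ Q, a * b = b * a)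
    (hidx : Q.index = p)
    (hcomm₁ : commutator R ≤ Q)
    (hcomm₂ : ¬ commutator R ≤ Subgroup.center R)
    (hcent : Q = Subgroup.centralizer ((commutator R : Subgroup R) : Set R)) :
    (∀ A : Subgroup R, A.Normal → (∀ a ∈ A, ∀ b ∈ A, a * b = b * a) → A ≤ Q) ∧
      Q.Characteristic :=
  unique_maximal_abelian_normal_general p hp R Q hab hidx hcent
end
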